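/- Let A be an n×n real matrix and let u_1, …, u_{j+p} be orthonormal vectors in ℝⁿ such that for each 1 ≤ ℓ ≤ j there exist real scalars h_{i,ℓ} with A u_ℓ = Σ_{i=1}^{ℓ+p} h_{i,ℓ} u_i and h_{ℓ+p,ℓ} ≠ 0. Write j = (k−1)p + m with k ≥ 1 and 0 ≤ m < p, and let F be the n×p matrix with columns u_1,…,u_p. Then the banded Krylov subspace has full dimension: dim K_{k,m}(A, F) = kp + m = j + p. -/

import Mathlib

open Matrix

/-- The Krylov subspace `K_k(A,v) = span {v, Av, …, A^{k-1} v}`. -/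
def krylov {n : ℕ} (A : Matrix (Fin n) (Fin n) ℝ) (v : Fin n → ℝ) (k : ℕ) :
    Submodule ℝ (Fin n → ℝ) :=
  Submodule.span ℝ {x | ∃ i < k, x = (A ^ i).mulVec v}

/-- The banded Krylov subspace
`K_{k,m}(A,F) = Σ_{ℓ=1}^{m} K_{k+1}(A,f_ℓ) + Σ_{ℓ=m+1}^{p} K_k(A,f_ℓ)`
(columns of `F` are zero-indexed here). -/
def bandedKrylov {n p : ℕ} (A : Matrix (Fin n) (Fin n) ℝ) (F : Matrix (Fin n) (Fin p) ℝ)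
    (k m : ℕ) : Submodule ℝ (Fin n → ℝ) :=
  ⨆ l : Fin p, krylov A (fun r => F r l) (if (l : ℕ) < m then k + 1 else k)

/-!
Put `w_{ip+l} = A^i u_l` for `l < p`. The banded Krylov space `K_{k,m}(A, F)` is spanned by the
`w_t` with `t < kp + m = j + p`. Since `w_{t+p} = A w_t` and `A u_s = h_{s+p,s} u_{s+p} + (terms in
u_r, r < s + p)` with `h_{s+p,s} ≠ 0`, induction gives `w_t = c_t u_t + (terms in u_s, s < t)` with
`c_t ≠ 0`. A family that is triangular with nonzero diagonal in this sense spans the same space as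
the `u_t`, which are orthonormal, hence independent, so the dimension is `j + p`.
-/

open Submodule Set

theorem Nat.mul_add_lt_mul_add_iff {i k l m p : ℕ} (hl : l < p) (hm : m ≤ p) :
    i * p + l < k * p + m ↔ i < if l < m then k + 1 else k := by
  rcases lt_trichotomy i k with hik | rfl | hki
  · have : (i + 1) * p ≤ k * p := Nat.mul_le_mul_right p hik
    split_ifs <;> constructor <;> intro <;> linarith [add_one_mul i p]
  · split_ifs <;> omega
  · have : (k + 1) * p ≤ i * p := Nat.mul_le_mul_right p hki
    split_ifs <;> constructor <;> intro <;> linarith [add_one_mul k p]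

theorem linearIndependent_of_dotProduct_eq_ite {R ι m : Type*} [CommRing R] [Fintype ι]
    [DecidableEq ι] [Fintype m] {u : ι → m → R} (hu : ∀ i l, u i ⬝ᵥ u l = if i = l then 1 else 0) :
    LinearIndependent R u := by
  rw [Fintype.linearIndependent_iff]
  intro g hg i
  simpa [sum_dotProduct, hu] using congrArg (· ⬝ᵥ u i) hg

section Triangular

variable {K V : Type*} [DivisionRing K] [AddCommGroup V] [Module K V]

theorem span_range_eq_of_sub_smul_mem {ι : Type*} [Preorder ι] [WellFoundedLT ι] {u w : ι → V}
    (h : ∀ t, ∃ c : K, c ≠ 0 ∧ w t - c • u t ∈ span K (u '' Iio t)) :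
    span K (range w) = span K (range u) := by
  have below_le : ∀ t, span K (u '' Iio t) ≤ span K (range u) :=
    fun t => span_mono (image_subset_range u _)
  apply le_antisymm
  · rw [span_le]
    rintro _ ⟨t, rfl⟩
    obtain ⟨c, -, hc⟩ := h t
    simpa using add_mem (smul_mem _ c (subset_span (mem_range_self t))) (below_le t hc)
  · rw [span_le]
    rintro _ ⟨t, rfl⟩
    induction t using WellFoundedLT.induction with
    | ind t ih =>
      obtain ⟨c, hc0, hc⟩ := h t
      have hbelow : span K (u '' Iio t) ≤ span K (range w) := by
        rw [span_le]
        rintro _ ⟨s, hs, rfl⟩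
        exact ih s hs
      have := smul_mem _ c⁻¹ (sub_mem (subset_span (mem_range_self t)) (hbelow hc))
      simpa [smul_smul, inv_mul_cancel₀ hc0] using this

variable {N : ℕ} (f : Module.End K V) (u : Fin N → V)

/-- The vector `f ^ i (u l)` in position `t = i * p + l` (with `l < p`). -/
def blockKrylovFamily (p : ℕ) (t : Fin N) : V :=
  (f ^ ((t : ℕ) / p)) (u ⟨t % p, (Nat.mod_le _ _).trans_lt t.isLt⟩)

variable {p : ℕ}

theorem blockKrylovFamily_of_div_eq_zero {t : Fin N} (ht : (t : ℕ) / p = 0) :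
    blockKrylovFamily f u p t = u t := by
  have hmod : (t : ℕ) % p = t := by simpa [ht] using Nat.div_add_mod' (t : ℕ) p
  simp only [blockKrylovFamily, ht, pow_zero, Module.End.one_apply, hmod]

theorem blockKrylovFamily_add (hp : 0 < p) (s : Fin N) (hs : (s : ℕ) + p < N) :
    blockKrylovFamily f u p ⟨s + p, hs⟩ = f (blockKrylovFamily f u p s) := by
  simp only [blockKrylovFamily, Nat.add_div_right _ hp, Nat.add_mod_right, pow_succ',
    Module.End.mul_apply]

def IsBandedRecurrence (p : ℕ) : Prop :=
  ∀ (l : Fin N) (hl : (l : ℕ) + p < N),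
    ∃ h : K, h ≠ 0 ∧ f (u l) - h • u ⟨l + p, hl⟩ ∈ span K (u '' Iio ⟨l + p, hl⟩)

variable {f u}

theorem IsBandedRecurrence.map_span_Iio_le (hf : IsBandedRecurrence f u p) {s t : Fin N}
    (hst : (s : ℕ) + p ≤ t) : (span K (u '' Iio s)).map f ≤ span K (u '' Iio t) := by
  rw [map_span_le]
  rintro _ ⟨l, hl, rfl⟩
  have hlt : (l : ℕ) + p < t := by simp only [mem_Iio, Fin.lt_def] at hl; omega
  obtain ⟨h, -, hh⟩ := hf l (hlt.trans t.isLt)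
  have hle : span K (u '' Iio ⟨l + p, hlt.trans t.isLt⟩) ≤ span K (u '' Iio t) :=
    span_mono (image_mono (Iio_subset_Iio (Fin.le_def.2 hlt.le)))
  have hmem : u ⟨l + p, hlt.trans t.isLt⟩ ∈ span K (u '' Iio t) :=
    subset_span (mem_image_of_mem u (show (⟨l + p, _⟩ : Fin N) ∈ Iio t from hlt))
  simpa using add_mem (hle hh) (smul_mem _ h hmem)

theorem IsBandedRecurrence.blockKrylovFamily_sub_smul_mem (hf : IsBandedRecurrence f u p)
    (t : Fin N) : ∃ c : K, c ≠ 0 ∧ blockKrylovFamily f u p t - c • u t ∈ span K (u '' Iio t) := by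
  induction t using WellFoundedLT.induction with
  | ind t ih =>
    by_cases ht : (t : ℕ) / p = 0
    · exact ⟨1, one_ne_zero, by simp [blockKrylovFamily_of_div_eq_zero f u ht]⟩
    obtain ⟨hp, hpt⟩ : 0 < p ∧ p ≤ t := by
      simpa [Nat.div_eq_zero_iff, not_or, Nat.pos_iff_ne_zero] using ht
    obtain ⟨s, hs, rfl⟩ : ∃ (s : Fin N) (hs : (s : ℕ) + p < N), t = ⟨s + p, hs⟩ :=
      ⟨⟨t - p, by omega⟩, by simp; omega, by ext; simp; omega⟩
    obtain ⟨c, hc0, hc⟩ := ih s (Fin.lt_def.2 (by simp; omega))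
    obtain ⟨h, hh0, hh⟩ := hf s hs
    refine ⟨c * h, mul_ne_zero hc0 hh0, ?_⟩
    have key : blockKrylovFamily f u p ⟨s + p, hs⟩ - (c * h) • u ⟨s + p, hs⟩ =
        f (blockKrylovFamily f u p s - c • u s) + c • (f (u s) - h • u ⟨s + p, hs⟩) := by
      rw [blockKrylovFamily_add f u hp s hs, map_sub, map_smul, smul_sub, mul_smul]
      abel
    rw [key]
    exact add_mem (hf.map_span_Iio_le le_rfl (mem_map_of_mem hc)) (smul_mem _ c hh)

theorem IsBandedRecurrence.span_range_blockKrylovFamily (hf : IsBandedRecurrence f u p) :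
    span K (range (blockKrylovFamily f u p)) = span K (range u) :=
  span_range_eq_of_sub_smul_mem hf.blockKrylovFamily_sub_smul_mem

theorem sum_filter_le_sub_smul_mem_span_Iio (h : Fin N → K) (t : Fin N) :
    ∑ i ∈ Finset.univ.filter (fun i : Fin N => (i : ℕ) ≤ t), h i • u i - h t • u t ∈
      span K (u '' Iio t) := by
  have ht : t ∈ Finset.univ.filter (fun i : Fin N => (i : ℕ) ≤ t) := by simp
  rw [← Finset.add_sum_erase _ _ ht, add_sub_cancel_left]
  refine sum_mem fun i hi => smul_mem _ _ (subset_span (mem_image_of_mem u ?_))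
  simp only [Finset.mem_erase, Finset.mem_filter, Finset.mem_univ, true_and] at hi
  exact lt_of_le_of_ne (Fin.le_def.2 hi.2) hi.1

end Triangular

theorem bandedKrylov_eq_span_range_blockKrylovFamily {n N p k m : ℕ}
    (A : Matrix (Fin n) (Fin n) ℝ) (u : Fin N → Fin n → ℝ) (hm : m ≤ p) (hN : N = k * p + m)
    (hpN : p ≤ N) :
    bandedKrylov A (of fun r (l : Fin p) => u (Fin.castLE hpN l) r) k m =
      span ℝ (range (blockKrylovFamily (toLin' A) u p)) := by
  unfold bandedKrylov krylov
  rw [← span_iUnion]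
  congr 1
  ext x
  simp only [mem_iUnion, mem_ofPred_eq, mem_range, blockKrylovFamily, ← toLin'_pow, toLin'_apply,
    of_apply]
  constructor
  · rintro ⟨l, i, hi, rfl⟩
    have hp : 0 < p := l.pos
    refine ⟨⟨i * p + l, hN ▸ (Nat.mul_add_lt_mul_add_iff l.isLt hm).2 hi⟩, ?_⟩
    have hdiv : (i * p + l) / p = i := by
      rw [add_comm, Nat.add_mul_div_right _ _ hp, Nat.div_eq_of_lt l.isLt, zero_add]
    rw [hdiv]
    congr 2
    ext
    simp [Nat.mod_eq_of_lt l.isLt]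
  · rintro ⟨t, rfl⟩
    have hp : 0 < p := Nat.pos_of_ne_zero (by rintro rfl; have := t.isLt; omega)
    refine ⟨⟨t % p, Nat.mod_lt _ hp⟩, t / p, ?_, rfl⟩
    rw [← Nat.mul_add_lt_mul_add_iff (Nat.mod_lt _ hp) hm, Nat.div_add_mod']
    omega

/-- If `u_1, …, u_{j+p}` are orthonormal vectors satisfying the banded Lanczos recurrences
`A u_ℓ = Σ_{i=1}^{ℓ+p} h_{i,ℓ} u_i` with `h_{ℓ+p,ℓ} ≠ 0` for all `ℓ ≤ j` (no breakdown),
and `j = (k-1)p + m` with `k ≥ 1`, `0 ≤ m < p`, then the banded Krylov subspace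
`K_{k,m}(A, F)` (with `F` having columns `u_1, …, u_p`) has full dimension
`kp + m = j + p`. -/
theorem banded_lanczos_dimension {n j p k m : ℕ} (hk : 1 ≤ k) (hm : m < p)
    (hj : j = (k - 1) * p + m)
    (A : Matrix (Fin n) (Fin n) ℝ) (u : Fin (j + p) → Fin n → ℝ)
    (hortho : ∀ i l : Fin (j + p), u i ⬝ᵥ u l = if i = l then 1 else 0)
    (hrec : ∀ l : Fin j, ∃ h : Fin (j + p) → ℝ,
      A.mulVec (u (Fin.castAdd p l)) =
          ∑ i ∈ Finset.univ.filter (fun i : Fin (j + p) => (i : ℕ) ≤ (l : ℕ) + p),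
            h i • u i ∧
        h ⟨(l : ℕ) + p, by omega⟩ ≠ 0) :
    Module.finrank ℝ
        (bandedKrylov A (Matrix.of fun r (l : Fin p) => u (Fin.castLE (by omega) l) r) k m) =
        k * p + m ∧
      k * p + m = j + p := by
  have hN : k * p + m = j + p := by
    have := Nat.le_mul_of_pos_left p hk
    rw [Nat.sub_one_mul] at hj
    omega
  have hbanded : IsBandedRecurrence (toLin' A) u p := by
    intro l hl
    obtain ⟨h, hAu, hh⟩ := hrec ⟨l, by omega⟩
    refine ⟨h ⟨l + p, hl⟩, hh, ?_⟩
    rw [toLin'_apply, show u l = u (Fin.castAdd p ⟨l, by omega⟩) from rfl, hAu]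
    exact sum_filter_le_sub_smul_mem_span_Iio h ⟨l + p, hl⟩
  rw [bandedKrylov_eq_span_range_blockKrylovFamily A u hm.le hN.symm,
    hbanded.span_range_blockKrylovFamily,
    finrank_span_eq_card (linearIndependent_of_dotProduct_eq_ite hortho), Fintype.card_fin]
  exact ⟨hN.symm, hN⟩
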